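/- arXiv:math/0103180 — 4 statements merged into one kernel-verified Lean document; each statement's English description precedes it below -/
import Mathlib

section
/- Let J = (a,b) with a < 0 < b, let g : ℝ → ℝ be C¹ on J with g(0) = 0, g'(0) > 0 and x·g(x) > 0 for all x ∈ J \ {0}, and let G(x) = ∫₀ˣ g(s) ds. If d/dx (g(x)/x) > 0 for all x ∈ (a,0) and d/dx (g(x)/x) < 0 for all x ∈ (0,b), then the period function is strictly increasing: for all r, r' ∈ (0,b) with r < r' and all s, s' ∈ (a,0) with G(s) = G(r) and G(s') = G(r'), one has √2 ∫ₛʳ dx/√(G(r) − G(x)) < √2 ∫_{s'}^{r'} dx/√(G(r') − G(x)). -/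
/-!
Split the period integral at `0`. The substitution `x ↦ -x` turns the left half into a right
half for the reflected force `-g (-x)`, which satisfies the same hypotheses on `(0, -a)`, so it
suffices that the half-period `R(r) = ∫₀ʳ dx / √(G r - G x)` increases whenever `g > 0` and
`g(x)/x` decreases. Substituting `x = r t` gives `R(r) = ∫₀¹ dt / √((G r - G (r t)) / r²)`, and
the `r`-derivative of `(G r - G (r t)) / r²` is `(ψ r - ψ (r t)) / r³` with
`ψ x = x g x - 2 G x`. Since `ψ' = x² (g(x)/x)' < 0`, the integrand increases pointwise in `r`.
-/

open Set Real Filter Topology MeasureTheory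

lemma strictMonoOn_Ioo_of_hasDerivAt_pos {f f' : ℝ → ℝ} {a b : ℝ}
    (hf : ∀ x ∈ Ioo a b, HasDerivAt f (f' x) x) (hpos : ∀ x ∈ Ioo a b, 0 < f' x) :
    StrictMonoOn f (Ioo a b) :=
  strictMonoOn_of_hasDerivWithinAt_pos (convex_Ioo a b)
    (fun x hx => (hf x hx).continuousAt.continuousWithinAt)
    (by simpa only [interior_Ioo] using fun x hx => (hf x hx).hasDerivWithinAt)
    (by rwa [interior_Ioo])

lemma strictAntiOn_Ioo_of_hasDerivAt_neg {f f' : ℝ → ℝ} {a b : ℝ}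
    (hf : ∀ x ∈ Ioo a b, HasDerivAt f (f' x) x) (hneg : ∀ x ∈ Ioo a b, f' x < 0) :
    StrictAntiOn f (Ioo a b) :=
  strictAntiOn_of_hasDerivWithinAt_neg (convex_Ioo a b)
    (fun x hx => (hf x hx).continuousAt.continuousWithinAt)
    (by simpa only [interior_Ioo] using fun x hx => (hf x hx).hasDerivWithinAt)
    (by rwa [interior_Ioo])

lemma hasDerivAt_integral_of_continuousOn {E : Type*} [NormedAddCommGroup E] [NormedSpace ℝ E]
    [CompleteSpace E] {f : ℝ → E} {a b c x : ℝ} (hf : ContinuousOn f (Ioo a b))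
    (hc : c ∈ Ioo a b) (hx : x ∈ Ioo a b) :
    HasDerivAt (fun u => ∫ s in c..u, f s) (f x) x :=
  intervalIntegral.integral_hasDerivAt_right
    ((hf.mono (ordConnected_Ioo.uIcc_subset hc hx)).intervalIntegrable)
    (hf.stronglyMeasurableAtFilter isOpen_Ioo x hx) (hf.continuousAt (isOpen_Ioo.mem_nhds hx))

lemma eventually_linear_le_sub_of_hasDerivAt {f : ℝ → ℝ} {f' m r : ℝ}
    (hf : HasDerivAt f f' r) (hm : m < f') :
    ∀ᶠ x in 𝓝[<] r, m * (r - x) ≤ f r - f x := by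
  have hslope := (hasDerivAt_iff_tendsto_slope.1 hf).mono_left (nhdsLT_le_nhdsNE r)
  filter_upwards [hslope.eventually (lt_mem_nhds hm), self_mem_nhdsWithin] with x hx hxr
  rw [slope_def_field, lt_div_iff_of_neg (sub_neg.2 hxr)] at hx
  linarith

lemma differentiableAt_of_deriv_div_ne_zero {g : ℝ → ℝ} {x : ℝ} (hx : x ≠ 0)
    (h : deriv (fun y => g y / y) x ≠ 0) : DifferentiableAt ℝ g x := by
  refine ((differentiableAt_of_deriv_ne_zero h).mul differentiableAt_id).congr_of_eventuallyEq ?_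
  filter_upwards [isOpen_ne.mem_nhds hx] with y hy
  exact (div_mul_cancel₀ (g y) hy).symm

lemma mul_deriv_sub_eq_sq_mul_deriv_div {g : ℝ → ℝ} {x : ℝ} (hx : x ≠ 0)
    (hg : DifferentiableAt ℝ g x) :
    x * deriv g x - g x = x ^ 2 * deriv (fun y => g y / y) x := by
  rw [deriv_fun_div hg differentiableAt_fun_id hx, deriv_id'']
  field_simp

lemma deriv_neg_comp_neg_div (g : ℝ → ℝ) (x : ℝ) :
    deriv (fun y => -g (-y) / y) x = -deriv (fun y => g y / y) (-x) := by
  rw [← deriv_comp_neg (fun y => g y / y) x]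
  congr 1
  funext y
  rw [div_neg, neg_div]

lemma intervalIntegrable_one_div_sqrt_of_linear_le {f : ℝ → ℝ} {c r m : ℝ} (hcr : c ≤ r)
    (hm : 0 < m) (hf : ContinuousOn f (Ioo c r)) (hle : ∀ x ∈ Ioo c r, m * (r - x) ≤ f x) :
    IntervalIntegrable (fun x => 1 / √(f x)) volume c r := by
  have hbound : IntervalIntegrable (fun x => (√m)⁻¹ * (r - x) ^ (-(1 / 2) : ℝ)) volume c r := by
    have h := (intervalIntegral.intervalIntegrable_rpow' (a := 0) (b := r - c)
      (r := -(1 / 2)) (by norm_num)).comp_sub_left r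
    rw [sub_zero, sub_sub_cancel] at h
    exact h.symm.const_mul _
  rw [intervalIntegrable_iff_integrableOn_Ioo_of_le hcr] at hbound ⊢
  refine hbound.mono' ?_ (ae_restrict_of_forall_mem measurableSet_Ioo fun x hx => ?_)
  · refine ContinuousOn.aestronglyMeasurable (fun x hx => ?_) measurableSet_Ioo
    have hfx : 0 < f x := lt_of_lt_of_le (mul_pos hm (sub_pos.2 hx.2)) (hle x hx)
    exact continuousWithinAt_const.div ((hf x hx).sqrt) (Real.sqrt_pos.2 hfx).ne'
  · have hrx : 0 < r - x := sub_pos.2 hx.2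
    rw [Real.norm_of_nonneg (by positivity), Real.rpow_neg hrx.le, ← Real.sqrt_eq_rpow,
      ← mul_inv, ← Real.sqrt_mul hm.le, one_div]
    exact inv_anti₀ (by positivity) (Real.sqrt_le_sqrt (hle x hx))

lemma intervalIntegrable_one_div_sqrt_sub_of_hasDerivAt {f : ℝ → ℝ} {f' c r : ℝ} (hcr : c < r)
    (hf : ContinuousOn f (Ico c r)) (hlt : ∀ x ∈ Ico c r, f x < f r) (hfr : HasDerivAt f f' r)
    (hf' : 0 < f') : IntervalIntegrable (fun x => 1 / √(f r - f x)) volume c r := by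
  obtain ⟨l, hl, hlb⟩ := mem_nhdsLT_iff_exists_Ico_subset.1
    (eventually_linear_le_sub_of_hasDerivAt hfr (half_lt_self hf'))
  set d := max l c
  have hcd : c ≤ d := le_max_right l c
  have hdr : d < r := max_lt hl hcr
  have hcont : ContinuousOn (fun x => 1 / √(f r - f x)) (Ico c r) := fun x hx =>
    continuousWithinAt_const.div ((continuousWithinAt_const.sub (hf x hx)).sqrt)
      (Real.sqrt_pos.2 (sub_pos.2 (hlt x hx))).ne'
  refine IntervalIntegrable.trans (b := d) ?_ ?_
  · exact (hcont.mono (Icc_subset_Ico_right hdr)).intervalIntegrable_of_Icc hcd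
  · exact intervalIntegrable_one_div_sqrt_of_linear_le hdr.le (half_pos hf')
      ((continuousOn_const.sub hf).mono fun x hx => ⟨hcd.trans hx.1.le, hx.2⟩)
      fun x hx => hlb ⟨(le_max_left l c).trans hx.1.le, hx.2⟩

noncomputable def halfPeriod (G : ℝ → ℝ) (r : ℝ) : ℝ :=
  ∫ x in (0 : ℝ)..r, 1 / √(G r - G x)

section HalfPeriod

variable {b : ℝ} {g G : ℝ → ℝ}

lemma mul_mem_Ioo_of_mem_Ioo {ρ t : ℝ} (hρ : ρ ∈ Ioo 0 b) (ht : t ∈ Ioo 0 1) :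
    ρ * t ∈ Ioo 0 b ∧ ρ * t < ρ :=
  have hlt : ρ * t < ρ := mul_lt_of_lt_one_right hρ.1 ht.2
  ⟨⟨mul_pos hρ.1 ht.1, hlt.trans hρ.2⟩, hlt⟩

lemma strictAntiOn_mul_sub_two_mul (hG : ∀ x ∈ Ioo 0 b, HasDerivAt G (g x) x)
    (hq : ∀ x ∈ Ioo 0 b, deriv (fun y => g y / y) x < 0) :
    StrictAntiOn (fun x => x * g x - 2 * G x) (Ioo 0 b) := by
  have hgd : ∀ x ∈ Ioo 0 b, DifferentiableAt ℝ g x := fun x hx =>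
    differentiableAt_of_deriv_div_ne_zero hx.1.ne' (hq x hx).ne
  have hderiv : ∀ x ∈ Ioo 0 b,
      HasDerivAt (fun x => x * g x - 2 * G x) (x * deriv g x - g x) x := fun x hx =>
    (((hasDerivAt_id' x).fun_mul (hgd x hx).hasDerivAt).fun_sub
      ((hG x hx).const_mul 2)).congr_deriv (by ring)
  refine strictAntiOn_Ioo_of_hasDerivAt_neg hderiv fun x hx => ?_
  rw [mul_deriv_sub_eq_sq_mul_deriv_div hx.1.ne' (hgd x hx)]
  exact mul_neg_of_pos_of_neg (pow_pos hx.1 2) (hq x hx)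

lemma strictAntiOn_sub_comp_mul_div_sq (hG : ∀ x ∈ Ioo 0 b, HasDerivAt G (g x) x)
    (hq : ∀ x ∈ Ioo 0 b, deriv (fun y => g y / y) x < 0) {t : ℝ} (ht : t ∈ Ioo 0 1) :
    StrictAntiOn (fun ρ => (G ρ - G (ρ * t)) / ρ ^ 2) (Ioo 0 b) := by
  set ψ : ℝ → ℝ := fun x => x * g x - 2 * G x
  have hderiv : ∀ ρ ∈ Ioo 0 b,
      HasDerivAt (fun ρ => (G ρ - G (ρ * t)) / ρ ^ 2) ((ψ ρ - ψ (ρ * t)) / ρ ^ 3) ρ := by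
    intro ρ hρ
    have hGt : HasDerivAt (fun ρ => G (ρ * t)) (g (ρ * t) * t) ρ :=
      (hG _ (mul_mem_Ioo_of_mem_Ioo hρ ht).1).comp ρ (hasDerivAt_mul_const t)
    refine (((hG ρ hρ).fun_sub hGt).fun_div (hasDerivAt_pow 2 ρ)
      (pow_pos hρ.1 2).ne').congr_deriv ?_
    have := hρ.1.ne'
    simp only [ψ]
    field_simp
    ring
  refine strictAntiOn_Ioo_of_hasDerivAt_neg hderiv fun ρ hρ => ?_
  obtain ⟨hρt, hlt⟩ := mul_mem_Ioo_of_mem_Ioo hρ ht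
  exact div_neg_of_neg_of_pos (sub_neg.2 (strictAntiOn_mul_sub_two_mul hG hq hρt hρ hlt))
    (pow_pos hρ.1 3)

lemma strictMonoOn_div_sqrt_sub_comp_mul (hG : ∀ x ∈ Ioo 0 b, HasDerivAt G (g x) x)
    (hg : ∀ x ∈ Ioo 0 b, 0 < g x) (hq : ∀ x ∈ Ioo 0 b, deriv (fun y => g y / y) x < 0)
    {t : ℝ} (ht : t ∈ Ioo 0 1) :
    StrictMonoOn (fun ρ => ρ / √(G ρ - G (ρ * t))) (Ioo 0 b) := by
  intro r hr r' hr' hrr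
  have hpos : ∀ ρ ∈ Ioo 0 b, 0 < (G ρ - G (ρ * t)) / ρ ^ 2 := fun ρ hρ => by
    obtain ⟨hρt, hlt⟩ := mul_mem_Ioo_of_mem_Ioo hρ ht
    exact div_pos (sub_pos.2 (strictMonoOn_Ioo_of_hasDerivAt_pos hG hg hρt hρ hlt))
      (pow_pos hρ.1 2)
  have hinv : ∀ ρ ∈ Ioo 0 b, ρ / √(G ρ - G (ρ * t)) = (√((G ρ - G (ρ * t)) / ρ ^ 2))⁻¹ :=
    fun ρ hρ => by rw [Real.sqrt_div' _ (sq_nonneg ρ), Real.sqrt_sq hρ.1.le, inv_div]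
  simp only [hinv r hr, hinv r' hr']
  exact inv_strictAnti₀ (Real.sqrt_pos.2 (hpos r' hr'))
    (Real.sqrt_lt_sqrt (hpos r' hr').le (strictAntiOn_sub_comp_mul_div_sq hG hq ht hr hr' hrr))

lemma halfPeriod_eq_integral_unitInterval {r : ℝ} (hr : r ≠ 0) :
    halfPeriod G r = ∫ t in (0 : ℝ)..1, r / √(G r - G (r * t)) := by
  have h := intervalIntegral.integral_comp_mul_left (fun x => 1 / √(G r - G x)) hr
    (a := 0) (b := 1)
  simp only [mul_zero, mul_one, smul_eq_mul] at h
  simp only [div_eq_mul_one_div r]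
  rw [intervalIntegral.integral_const_mul, h, halfPeriod, mul_inv_cancel_left₀ hr]

lemma intervalIntegrable_halfPeriod (hG : ∀ x ∈ Ico 0 b, HasDerivAt G (g x) x)
    (hg : ∀ x ∈ Ioo 0 b, 0 < g x) {r : ℝ} (hr : r ∈ Ioo 0 b) :
    IntervalIntegrable (fun x => 1 / √(G r - G x)) volume 0 r := by
  have hGc : ContinuousOn G (Ico 0 b) := fun x hx => (hG x hx).continuousAt.continuousWithinAt
  have hmono : StrictMonoOn G (Ico 0 b) :=
    strictMonoOn_of_hasDerivWithinAt_pos (convex_Ico 0 b) hGc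
      (by simpa only [interior_Ico] using
        fun x hx => (hG x (Ioo_subset_Ico_self hx)).hasDerivWithinAt)
      (by rwa [interior_Ico])
  exact intervalIntegrable_one_div_sqrt_sub_of_hasDerivAt hr.1
    (hGc.mono (Ico_subset_Ico_right hr.2.le))
    (fun x hx => hmono ⟨hx.1, hx.2.trans hr.2⟩ ⟨hr.1.le, hr.2⟩ hx.2)
    (hG r ⟨hr.1.le, hr.2⟩) (hg r hr)

theorem halfPeriod_strictMonoOn (hG : ∀ x ∈ Ico 0 b, HasDerivAt G (g x) x)
    (hg : ∀ x ∈ Ioo 0 b, 0 < g x) (hq : ∀ x ∈ Ioo 0 b, deriv (fun y => g y / y) x < 0) :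
    StrictMonoOn (halfPeriod G) (Ioo 0 b) := by
  intro r hr r' hr' hrr
  have hint : ∀ ρ ∈ Ioo 0 b,
      IntervalIntegrable (fun t => ρ / √(G ρ - G (ρ * t))) volume 0 1 := fun ρ hρ => by
    have h := (intervalIntegrable_halfPeriod hG hg hρ).comp_mul_left (c := ρ)
    rw [zero_div, div_self hρ.1.ne'] at h
    simpa only [div_eq_mul_one_div ρ] using h.const_mul ρ
  have hlt : ∀ t ∈ Ioo (0 : ℝ) 1, r / √(G r - G (r * t)) < r' / √(G r' - G (r' * t)) :=
    fun t ht => strictMonoOn_div_sqrt_sub_comp_mul (fun x hx => hG x (Ioo_subset_Ico_self hx))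
      hg hq ht hr hr' hrr
  rw [halfPeriod_eq_integral_unitInterval hr.1.ne',
    halfPeriod_eq_integral_unitInterval hr'.1.ne',
    ← sub_pos, ← intervalIntegral.integral_sub (hint r' hr') (hint r hr)]
  exact intervalIntegral.intervalIntegral_pos_of_pos_on ((hint r' hr').sub (hint r hr))
    (fun t ht => sub_pos.2 (hlt t ht)) one_pos

end HalfPeriod

lemma integral_eq_halfPeriod_comp_neg_add_halfPeriod {G : ℝ → ℝ} {r s : ℝ} (hsr : G s = G r)
    (hs : IntervalIntegrable (fun x => 1 / √(G s - G (-x))) volume 0 (-s))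
    (hr : IntervalIntegrable (fun x => 1 / √(G r - G x)) volume 0 r) :
    ∫ x in s..r, 1 / √(G r - G x) = halfPeriod (fun x => G (-x)) (-s) + halfPeriod G r := by
  have hs' : IntervalIntegrable (fun x => 1 / √(G r - G x)) volume s 0 := by
    rw [IntervalIntegrable.iff_comp_neg, neg_zero, ← hsr]
    exact hs.symm
  rw [← intervalIntegral.integral_add_adjacent_intervals hs' hr, halfPeriod, halfPeriod,
    intervalIntegral.integral_comp_neg (fun x => 1 / √(G (-(-s)) - G x))]
  simp only [neg_neg, neg_zero, hsr]

theorem integral_one_div_sqrt_sub_lt {b c : ℝ} {g h G : ℝ → ℝ}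
    (hGr : ∀ x ∈ Ico 0 b, HasDerivAt G (g x) x) (hg : ∀ x ∈ Ioo 0 b, 0 < g x)
    (hqg : ∀ x ∈ Ioo 0 b, deriv (fun y => g y / y) x < 0)
    (hGl : ∀ x ∈ Ico 0 c, HasDerivAt (fun y => G (-y)) (h x) x) (hh : ∀ x ∈ Ioo 0 c, 0 < h x)
    (hqh : ∀ x ∈ Ioo 0 c, deriv (fun y => h y / y) x < 0)
    {r r' s s' : ℝ} (hr : r ∈ Ioo 0 b) (hr' : r' ∈ Ioo 0 b) (hrr : r < r')
    (hs : -s ∈ Ioo 0 c) (hs' : -s' ∈ Ioo 0 c) (hGs : G s = G r) (hGs' : G s' = G r') :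
    ∫ x in s..r, 1 / √(G r - G x) < ∫ x in s'..r', 1 / √(G r' - G x) := by
  have hss : -s < -s' := by
    refine ((strictMonoOn_Ioo_of_hasDerivAt_pos (fun x hx => hGl x (Ioo_subset_Ico_self hx))
      hh).lt_iff_lt hs hs').1 ?_
    simpa only [neg_neg, hGs, hGs'] using strictMonoOn_Ioo_of_hasDerivAt_pos
      (fun x hx => hGr x (Ioo_subset_Ico_self hx)) hg hr hr' hrr
  rw [integral_eq_halfPeriod_comp_neg_add_halfPeriod hGs
      (by simpa only [neg_neg] using intervalIntegrable_halfPeriod hGl hh hs)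
      (intervalIntegrable_halfPeriod hGr hg hr),
    integral_eq_halfPeriod_comp_neg_add_halfPeriod hGs'
      (by simpa only [neg_neg] using intervalIntegrable_halfPeriod hGl hh hs')
      (intervalIntegrable_halfPeriod hGr hg hr')]
  exact add_lt_add (halfPeriod_strictMonoOn hGl hh hqh hs hs' hss)
    (halfPeriod_strictMonoOn hGr hg hqg hr hr' hrr)

theorem period_strictMono_of_deriv_div_sign_general
    (a b : ℝ) (g : ℝ → ℝ) (ha : a < 0) (hb : 0 < b)
    (hg : ContDiffOn ℝ 1 g (Ioo a b))
    (hxg : ∀ x ∈ Ioo a b, x ≠ 0 → 0 < x * g x)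
    (G : ℝ → ℝ) (hG : ∀ x, G x = ∫ s in (0:ℝ)..x, g s)
    (hneg : ∀ x ∈ Ioo a (0:ℝ), 0 < deriv (fun y => g y / y) x)
    (hpos : ∀ x ∈ Ioo (0:ℝ) b, deriv (fun y => g y / y) x < 0) :
    ∀ r ∈ Ioo (0:ℝ) b, ∀ r' ∈ Ioo (0:ℝ) b, r < r' →
      ∀ s ∈ Ioo a (0:ℝ), ∀ s' ∈ Ioo a (0:ℝ), G s = G r → G s' = G r' →
      Real.sqrt 2 * (∫ x in s..r, 1 / Real.sqrt (G r - G x)) <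
        Real.sqrt 2 * (∫ x in s'..r', 1 / Real.sqrt (G r' - G x)) := by
  intro r hr r' hr' hrr s hs s' hs' hGs hGs'
  have hGder : ∀ x ∈ Ioo a b, HasDerivAt G (g x) x := fun x hx =>
    (funext hG).symm ▸ hasDerivAt_integral_of_continuousOn hg.continuousOn ⟨ha, hb⟩ hx
  have hneg_mem : ∀ {x}, x ∈ Ico 0 (-a) → -x ∈ Ioo a b := fun hx =>
    ⟨lt_neg.1 hx.2, (neg_nonpos.2 hx.1).trans_lt hb⟩
  have hGr : ∀ x ∈ Ico 0 b, HasDerivAt G (g x) x := fun x hx =>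
    hGder x ⟨ha.trans_le hx.1, hx.2⟩
  have hgr : ∀ x ∈ Ioo 0 b, 0 < g x := fun x hx =>
    pos_of_mul_pos_right (hxg x ⟨ha.trans hx.1, hx.2⟩ hx.1.ne') hx.1.le
  have hGl : ∀ x ∈ Ico 0 (-a), HasDerivAt (fun y => G (-y)) (-g (-x)) x := fun x hx =>
    ((hGder (-x) (hneg_mem hx)).comp x (hasDerivAt_neg x)).congr_deriv (mul_neg_one _)
  have hgl : ∀ x ∈ Ioo 0 (-a), 0 < -g (-x) := fun x hx =>
    neg_pos.2 (neg_of_mul_pos_right (hxg (-x) (hneg_mem (Ioo_subset_Ico_self hx))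
      (neg_ne_zero.2 hx.1.ne')) (neg_nonpos.2 hx.1.le))
  have hql : ∀ x ∈ Ioo 0 (-a), deriv (fun y => -g (-y) / y) x < 0 := fun x hx => by
    rw [deriv_neg_comp_neg_div]
    exact neg_neg_of_pos (hneg (-x) ⟨lt_neg.1 hx.2, neg_neg_of_pos hx.1⟩)
  exact mul_lt_mul_of_pos_left (integral_one_div_sqrt_sub_lt hGr hgr hpos hGl hgl hql
    hr hr' hrr ⟨neg_pos.2 hs.2, neg_lt_neg hs.1⟩ ⟨neg_pos.2 hs'.2, neg_lt_neg hs'.1⟩ hGs hGs')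
    (Real.sqrt_pos.2 two_pos)

/-- For the conservative equation `x'' + g(x) = 0`, if `d/dx (g(x)/x) > 0` on `(a,0)` and
`d/dx (g(x)/x) < 0` on `(0,b)`, then the period function
`T(r) = √2 ∫ₛʳ dx/√(G(r) − G(x))` (with `s ∈ (a,0)` determined by `G(s) = G(r)`)
is strictly increasing. -/
theorem period_strictMono_of_deriv_div_sign
    (a b : ℝ) (g : ℝ → ℝ) (ha : a < 0) (hb : 0 < b)
    (hg : ContDiffOn ℝ 1 g (Ioo a b)) (hg0 : g 0 = 0) (hg'0 : 0 < deriv g 0)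
    (hxg : ∀ x ∈ Ioo a b, x ≠ 0 → 0 < x * g x)
    (G : ℝ → ℝ) (hG : ∀ x, G x = ∫ s in (0:ℝ)..x, g s)
    (hneg : ∀ x ∈ Ioo a (0:ℝ), 0 < deriv (fun y => g y / y) x)
    (hpos : ∀ x ∈ Ioo (0:ℝ) b, deriv (fun y => g y / y) x < 0) :
    ∀ r ∈ Ioo (0:ℝ) b, ∀ r' ∈ Ioo (0:ℝ) b, r < r' →
      ∀ s ∈ Ioo a (0:ℝ), ∀ s' ∈ Ioo a (0:ℝ), G s = G r → G s' = G r' →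
      Real.sqrt 2 * (∫ x in s..r, 1 / Real.sqrt (G r - G x)) <
        Real.sqrt 2 * (∫ x in s'..r', 1 / Real.sqrt (G r' - G x)) :=
  period_strictMono_of_deriv_div_sign_general a b g ha hb hg hxg G hG hneg hpos
end

section
/- Let J = (a,b) with a < 0 < b, let g : ℝ → ℝ be C¹ on J with g(0) = 0, g'(0) > 0 and x·g(x) > 0 for all x ∈ J \ {0}, and let G(x) = ∫₀ˣ g(s) ds. If d/dx (g(x)/x) < 0 for all x ∈ (a,0) and d/dx (g(x)/x) > 0 for all x ∈ (0,b), then the period function is strictly decreasing: for all r, r' ∈ (0,b) with r < r' and all s, s' ∈ (a,0) with G(s) = G(r) and G(s') = G(r'), one has √2 ∫ₛʳ dx/√(G(r) − G(x)) > √2 ∫_{s'}^{r'} dx/√(G(r') − G(x)). -/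
open Set Real MeasureTheory intervalIntegral

namespace PeriodAux

variable {b : ℝ} {g G : ℝ → ℝ}

/-- integrability of `g` on subintervals of `[0, b)`. -/
lemma gInt (hgc : ContinuousOn g (Ico 0 b)) {x y : ℝ} (hx : 0 ≤ x) (hxy : x ≤ y)
    (hy : y < b) : IntervalIntegrable g volume x y := by
  apply ContinuousOn.intervalIntegrable
  apply hgc.mono
  rw [uIcc_of_le hxy]
  exact fun t ht => ⟨hx.trans ht.1, lt_of_le_of_lt ht.2 hy⟩

lemma Gdiff (hG : ∀ x, G x = ∫ t in (0:ℝ)..x, g t) (hgc : ContinuousOn g (Ico 0 b))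
    {x y : ℝ} (hx : 0 ≤ x) (hxy : x ≤ y) (hy : y < b) :
    G y - G x = ∫ t in x..y, g t := by
  rw [hG, hG]
  exact integral_interval_sub_left (gInt hgc le_rfl (hx.trans hxy) hy)
    (gInt hgc le_rfl hx (lt_of_le_of_lt hxy hy))

lemma Glt (hG : ∀ x, G x = ∫ t in (0:ℝ)..x, g t) (hgc : ContinuousOn g (Ico 0 b))
    (hgpos : ∀ x ∈ Ioo (0:ℝ) b, 0 < g x)
    {x y : ℝ} (hx : 0 ≤ x) (hxy : x < y) (hy : y < b) : G x < G y := by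
  have h := Gdiff hG hgc hx hxy.le hy
  have hpos : 0 < ∫ t in x..y, g t :=
    intervalIntegral_pos_of_pos_on (gInt hgc hx hxy.le hy)
      (fun t ht => hgpos t ⟨lt_of_le_of_lt hx ht.1, ht.2.trans hy⟩) hxy
  linarith

lemma Gle (hG : ∀ x, G x = ∫ t in (0:ℝ)..x, g t) (hgc : ContinuousOn g (Ico 0 b))
    (hgpos : ∀ x ∈ Ioo (0:ℝ) b, 0 < g x)
    {x y : ℝ} (hx : 0 ≤ x) (hxy : x ≤ y) (hy : y < b) : G x ≤ G y := by
  rcases eq_or_lt_of_le hxy with h | h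
  · rw [h]
  · exact (Glt hG hgc hgpos hx h hy).le

/-- The core inequality coming from strict monotonicity of `g x / x`. -/
lemma core (hG : ∀ x, G x = ∫ t in (0:ℝ)..x, g t) (hgc : ContinuousOn g (Ico 0 b))
    (hgpos : ∀ x ∈ Ioo (0:ℝ) b, 0 < g x)
    (hmono : StrictMonoOn (fun x => g x / x) (Ioo (0:ℝ) b))
    {ρ c : ℝ} (hρ : ρ ∈ Ioo (0:ℝ) b) (hc : 0 ≤ c) (hcρ : c < ρ) :
    2 * (G ρ - G c) < ρ * g ρ - c * g c := by
  have hρ0 : (0:ℝ) < ρ := hρ.1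
  set K := g ρ / ρ with hK
  have hKρ : K * ρ = g ρ := div_mul_cancel₀ _ hρ0.ne'
  have hint1 : IntervalIntegrable g volume c ρ := gInt hgc hc hcρ.le hρ.2
  have hint2 : IntervalIntegrable (fun t : ℝ => t * K) volume c ρ :=
    (continuous_id.mul continuous_const).intervalIntegrable _ _
  have key : 0 < ∫ t in c..ρ, (t * K - g t) := by
    refine intervalIntegral_pos_of_pos_on (hint2.sub hint1) ?_ hcρ
    intro t ht
    have ht0 : 0 < t := lt_of_le_of_lt hc ht.1
    have htb : t ∈ Ioo (0:ℝ) b := ⟨ht0, ht.2.trans hρ.2⟩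
    have hlt := hmono htb hρ ht.2
    simp only [] at hlt
    have h4 : g t * ρ < g ρ * t := (div_lt_div_iff₀ ht0 hρ0).mp hlt
    nlinarith [h4, hKρ, hρ0]
  have heval : (∫ t in c..ρ, (t * K - g t)) = (ρ^2 - c^2)/2 * K - (G ρ - G c) := by
    rw [integral_sub hint2 hint1, ← Gdiff hG hgc hc hcρ.le hρ.2, intervalIntegral.integral_mul_const,
      integral_id]
  have h1 : 2 * (G ρ - G c) < (ρ^2 - c^2) * K := by nlinarith [key, heval]
  have h3 : c * g c ≤ c^2 * K := by
    rcases eq_or_lt_of_le hc with h | h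
    · simp [← h]
    · have hlt := hmono ⟨h, hcρ.trans hρ.2⟩ hρ hcρ
      simp only [] at hlt
      have h4 : g c * ρ < g ρ * c := (div_lt_div_iff₀ h hρ0).mp hlt
      nlinarith [h4, hKρ, hρ0, h]
  nlinarith [h1, h3, hKρ, hρ0]

lemma GhasDeriv (hG : ∀ x, G x = ∫ t in (0:ℝ)..x, g t) (hgc : ContinuousOn g (Ico 0 b))
    {x : ℝ} (hx : x ∈ Ioo (0:ℝ) b) : HasDerivAt G (g x) x := by
  have hGfun : G = fun y => ∫ t in (0:ℝ)..y, g t := funext hG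
  rw [hGfun]
  have hopen : Ioo (0:ℝ) b ∈ nhds x := isOpen_Ioo.mem_nhds hx
  refine integral_hasDerivAt_right (gInt hgc le_rfl hx.1.le hx.2) ?_ ?_
  · exact (hgc.mono Ioo_subset_Ico_self).stronglyMeasurableAtFilter isOpen_Ioo x hx
  · exact (hgc.mono Ioo_subset_Ico_self).continuousAt hopen

lemma Mmono (hG : ∀ x, G x = ∫ t in (0:ℝ)..x, g t) (hgc : ContinuousOn g (Ico 0 b))
    (hgpos : ∀ x ∈ Ioo (0:ℝ) b, 0 < g x)
    (hmono : StrictMonoOn (fun x => g x / x) (Ioo (0:ℝ) b))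
    {u : ℝ} (hu : 0 ≤ u) (hu1 : u < 1) :
    StrictMonoOn (fun ρ => (G ρ - G (ρ*u)) / ρ^2) (Ioo (0:ℝ) b) := by
  have hderiv : ∀ ρ ∈ Ioo (0:ℝ) b, HasDerivAt (fun ρ => (G ρ - G (ρ*u)) / ρ^2)
      (((g ρ - g (ρ*u) * u) * ρ^2 - (G ρ - G (ρ*u)) * (2*ρ)) / (ρ^2)^2) ρ := by
    intro ρ hρ
    have h1 : HasDerivAt (fun ρ => G (ρ*u)) (g (ρ*u) * u) ρ := by
      rcases eq_or_lt_of_le hu with h | h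
      · simp only [← h, mul_zero]
        exact hasDerivAt_const ρ (G 0)
      · have hmem : ρ*u ∈ Ioo (0:ℝ) b := by
          constructor
          · exact mul_pos hρ.1 h
          · have : ρ * u < ρ := by nlinarith [hρ.1]
            exact this.trans hρ.2
        have := (GhasDeriv hG hgc hmem).comp ρ (hasDerivAt_mul_const u)
        exact this
    have h2 := (GhasDeriv hG hgc hρ).sub h1
    have h3 : HasDerivAt (fun ρ : ℝ => ρ^2) (2*ρ) ρ := by
      simpa [mul_comm] using hasDerivAt_pow 2 ρ
    exact h2.div h3 (pow_ne_zero 2 hρ.1.ne')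
  apply strictMonoOn_of_deriv_pos (convex_Ioo 0 b)
  · intro ρ hρ
    exact ((hderiv ρ hρ).differentiableAt.continuousAt).continuousWithinAt
  · intro ρ hρ
    rw [interior_Ioo] at hρ
    rw [(hderiv ρ hρ).deriv]
    have hρ0 : (0:ℝ) < ρ := hρ.1
    have hcρ : ρ * u < ρ := by nlinarith
    have hcore := core hG hgc hgpos hmono hρ (mul_nonneg hρ0.le hu) hcρ
    apply div_pos ?_ (by positivity)
    nlinarith [mul_pos hρ0 (show (0:ℝ) < ρ * g ρ - ρ*u * g (ρ*u) - 2*(G ρ - G (ρ*u)) by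
      linarith)]

lemma Fval (hG : ∀ x, G x = ∫ t in (0:ℝ)..x, g t) (hgc : ContinuousOn g (Ico 0 b))
    (hgpos : ∀ x ∈ Ioo (0:ℝ) b, 0 < g x)
    {ρ u : ℝ} (hρ : ρ ∈ Ioo (0:ℝ) b) (hu0 : 0 ≤ u) (hu1 : u < 1) :
    ρ * (1 / Real.sqrt (G ρ - G (ρ*u))) = 1 / Real.sqrt ((G ρ - G (ρ*u)) / ρ^2) := by
  have hρ0 : (0:ℝ) < ρ := hρ.1
  have hXpos : 0 < G ρ - G (ρ*u) := by
    have := Glt hG hgc hgpos (mul_nonneg hρ0.le hu0) (by nlinarith : ρ * u < ρ) hρ.2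
    linarith
  rw [Real.sqrt_div hXpos.le, Real.sqrt_sq hρ0.le]
  have hs : 0 < Real.sqrt (G ρ - G (ρ*u)) := Real.sqrt_pos.mpr hXpos
  field_simp

lemma Fstrict (hG : ∀ x, G x = ∫ t in (0:ℝ)..x, g t) (hgc : ContinuousOn g (Ico 0 b))
    (hgpos : ∀ x ∈ Ioo (0:ℝ) b, 0 < g x)
    (hmono : StrictMonoOn (fun x => g x / x) (Ioo (0:ℝ) b))
    {r r' u : ℝ} (hr : r ∈ Ioo (0:ℝ) b) (hr' : r' ∈ Ioo (0:ℝ) b) (hrr' : r < r')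
    (hu : u ∈ Ioo (0:ℝ) 1) :
    r' * (1 / Real.sqrt (G r' - G (r'*u))) < r * (1 / Real.sqrt (G r - G (r*u))) := by
  rw [Fval hG hgc hgpos hr hu.1.le hu.2, Fval hG hgc hgpos hr' hu.1.le hu.2]
  have hM := Mmono hG hgc hgpos hmono hu.1.le hu.2 hr hr' hrr'
  simp only [] at hM
  have hMrpos : 0 < (G r - G (r*u)) / r^2 := by
    apply div_pos ?_ (pow_pos hr.1 2)
    have := Glt hG hgc hgpos (mul_nonneg hr.1.le hu.1.le)
      (by nlinarith [hr.1, hu.2] : r * u < r) hr.2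
    linarith
  have h1 : 0 < Real.sqrt ((G r - G (r*u)) / r^2) := Real.sqrt_pos.mpr hMrpos
  have h2 : Real.sqrt ((G r - G (r*u)) / r^2) < Real.sqrt ((G r' - G (r'*u)) / r'^2) :=
    Real.sqrt_lt_sqrt hMrpos.le hM
  exact one_div_lt_one_div_of_lt h1 h2

lemma uIntegrable (hG : ∀ x, G x = ∫ t in (0:ℝ)..x, g t) (hgc : ContinuousOn g (Ico 0 b))
    (hgpos : ∀ x ∈ Ioo (0:ℝ) b, 0 < g x)
    {ρ : ℝ} (hρ : ρ ∈ Ioo (0:ℝ) b) :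
    IntervalIntegrable (fun u => 1 / Real.sqrt (G ρ - G (ρ*u))) volume 0 1 := by
  have hρ0 : (0:ℝ) < ρ := hρ.1
  -- minimum of g on [ρ/2, ρ]
  obtain ⟨t₀, ht₀, hmin⟩ := isCompact_Icc.exists_isMinOn
    (nonempty_Icc.mpr (by linarith : ρ/2 ≤ ρ))
    (hgc.mono (fun t ht => ⟨by linarith [ht.1], lt_of_le_of_lt ht.2 hρ.2⟩))
  set m := g t₀ with hm
  have hm0 : 0 < m := hgpos t₀ ⟨by linarith [ht₀.1], lt_of_le_of_lt ht₀.2 hρ.2⟩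
  have hminle : ∀ t ∈ Icc (ρ/2) ρ, m ≤ g t := fun t ht => hmin ht
  -- the key lower bound
  have bound : ∀ u ∈ Icc (0:ℝ) 1, m * ρ / 2 * (1 - u) ≤ G ρ - G (ρ*u) := by
    intro u hu
    have hu0 : 0 ≤ u := hu.1
    have hu1 : u ≤ 1 := hu.2
    have hρu : ρ * u ≤ ρ := by nlinarith
    have intconst : ∀ {x : ℝ}, ρ/2 ≤ x → x ≤ ρ → m * (ρ - x) ≤ G ρ - G x := by
      intro x hx1 hx2
      rw [Gdiff hG hgc (by linarith) hx2 hρ.2]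
      calc m * (ρ - x) = ∫ _ in x..ρ, m := by
            rw [intervalIntegral.integral_const, smul_eq_mul]; ring
        _ ≤ ∫ t in x..ρ, g t := by
            apply integral_mono_on hx2 intervalIntegrable_const
              (gInt hgc (by linarith) hx2 hρ.2)
            exact fun t ht => hminle t ⟨le_trans hx1 ht.1, ht.2⟩
    rcases le_total u (1/2) with h | h
    · have h1 : G (ρ*u) ≤ G (ρ/2) :=
        Gle hG hgc hgpos (mul_nonneg hρ0.le hu0) (by nlinarith) (by linarith [hρ.2])
      have h2 : m * (ρ - ρ/2) ≤ G ρ - G (ρ/2) := intconst le_rfl (by linarith)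
      nlinarith [mul_nonneg (mul_nonneg hm0.le hρ0.le) hu0]
    · have h2 : m * (ρ - ρ*u) ≤ G ρ - G (ρ*u) := intconst (by nlinarith) hρu
      nlinarith [mul_nonneg (mul_nonneg hm0.le hρ0.le) (by linarith : (0:ℝ) ≤ 1 - u)]
  -- measurability
  have hGc : ContinuousOn G (Icc 0 ρ) := by
    have hGfun : G = fun y => ∫ t in (0:ℝ)..y, g t := funext hG
    rw [hGfun]
    have hint : IntegrableOn g (uIcc (0:ℝ) ρ) volume := by
      rw [uIcc_of_le hρ0.le]
      exact (hgc.mono (fun t ht => ⟨ht.1, lt_of_le_of_lt ht.2 hρ.2⟩)).integrableOn_compact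
        isCompact_Icc
    have := continuousOn_primitive_interval (μ := volume) (a := (0:ℝ)) (b := ρ) hint
    rwa [uIcc_of_le hρ0.le] at this
  have hXcont : ContinuousOn (fun u : ℝ => G ρ - G (ρ*u)) (Icc 0 1) := by
    apply continuousOn_const.sub
    have hmul : Continuous fun u : ℝ => ρ * u := continuous_const.mul continuous_id
    exact hGc.comp hmul.continuousOn
      (fun u hu => ⟨mul_nonneg hρ0.le hu.1, by nlinarith [hu.1, hu.2]⟩)
  have hmeas : AEStronglyMeasurable (fun u => 1 / Real.sqrt (G ρ - G (ρ*u)))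
      (volume.restrict (Ioc (0:ℝ) 1)) := by
    have h1 : AEMeasurable (fun u : ℝ => G ρ - G (ρ*u)) (volume.restrict (Ioc (0:ℝ) 1)) :=
      (hXcont.mono Ioc_subset_Icc_self).aemeasurable measurableSet_Ioc
    have h2 : Measurable fun y : ℝ => 1 / Real.sqrt y :=
      measurable_const.div Real.continuous_sqrt.measurable
    exact (h2.comp_aemeasurable h1).aestronglyMeasurable
  -- comparison function
  have hcomp : IntervalIntegrable (fun u : ℝ => (1 - u) ^ (-(1/2) : ℝ)) volume 0 1 := by
    have h := (intervalIntegrable_rpow' (show (-1:ℝ) < -(1/2) by norm_num)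
      (a := (0:ℝ)) (b := (1:ℝ))).comp_sub_left 1
    simpa using h.symm
  have hψ : IntervalIntegrable
      (fun u : ℝ => (1 / Real.sqrt (m * ρ / 2)) * (1 - u) ^ (-(1/2) : ℝ)) volume 0 1 :=
    hcomp.const_mul _
  rw [intervalIntegrable_iff_integrableOn_Ioc_of_le zero_le_one]
  rw [intervalIntegrable_iff_integrableOn_Ioc_of_le zero_le_one] at hψ
  refine MeasureTheory.Integrable.mono hψ hmeas ?_
  rw [ae_restrict_iff' measurableSet_Ioc]
  filter_upwards with u hu
  have hu0 : 0 < u := hu.1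
  have hu1 : u ≤ 1 := hu.2
  have hXnn : 0 ≤ G ρ - G (ρ*u) := by
    have hbd := bound u ⟨hu0.le, hu1⟩
    nlinarith [mul_nonneg (mul_nonneg hm0.le hρ0.le) (by linarith : (0:ℝ) ≤ 1 - u)]
  have hc2 : (0:ℝ) < m * ρ / 2 := by positivity
  rw [Real.norm_eq_abs, Real.norm_eq_abs]
  rw [abs_of_nonneg (by positivity),
    abs_of_nonneg (mul_nonneg (by positivity) (Real.rpow_nonneg (by linarith) _))]
  rcases eq_or_lt_of_le hu1 with h1 | h1
  · rw [h1]
    simp [Real.zero_rpow (by norm_num : (-(1/2) : ℝ) ≠ 0)]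
  · have h1u : (0:ℝ) < 1 - u := by linarith
    have hrp : (1 - u) ^ (-(1/2) : ℝ) = 1 / Real.sqrt (1 - u) := by
      rw [Real.rpow_neg h1u.le, Real.sqrt_eq_rpow]
      norm_num
    rw [hrp]
    have hXlow : m * ρ / 2 * (1 - u) ≤ G ρ - G (ρ*u) := bound u ⟨hu0.le, hu1⟩
    have hs1 : Real.sqrt (m * ρ / 2) * Real.sqrt (1 - u) ≤ Real.sqrt (G ρ - G (ρ*u)) := by
      rw [← Real.sqrt_mul hc2.le]
      exact Real.sqrt_le_sqrt hXlow
    have hspos : 0 < Real.sqrt (m * ρ / 2) * Real.sqrt (1 - u) := by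
      apply mul_pos (Real.sqrt_pos.mpr hc2) (Real.sqrt_pos.mpr h1u)
    calc 1 / Real.sqrt (G ρ - G (ρ*u))
        ≤ 1 / (Real.sqrt (m * ρ / 2) * Real.sqrt (1 - u)) :=
          one_div_le_one_div_of_le hspos hs1
      _ = 1 / Real.sqrt (m * ρ / 2) * (1 / Real.sqrt (1 - u)) := by ring

lemma xIntegrable (hG : ∀ x, G x = ∫ t in (0:ℝ)..x, g t) (hgc : ContinuousOn g (Ico 0 b))
    (hgpos : ∀ x ∈ Ioo (0:ℝ) b, 0 < g x)
    {ρ : ℝ} (hρ : ρ ∈ Ioo (0:ℝ) b) :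
    IntervalIntegrable (fun x => 1 / Real.sqrt (G ρ - G x)) volume 0 ρ := by
  have hρ0 : ρ ≠ 0 := hρ.1.ne'
  have h := (uIntegrable hG hgc hgpos hρ).comp_mul_left (c := ρ⁻¹)
  have hfun : (fun x => 1 / Real.sqrt (G ρ - G (ρ * (ρ⁻¹ * x))))
      = fun x => 1 / Real.sqrt (G ρ - G x) := by
    funext x
    rw [← mul_assoc, mul_inv_cancel₀ hρ0, one_mul]
  rw [hfun] at h
  simpa [hρ0] using h

lemma posLt (hG : ∀ x, G x = ∫ t in (0:ℝ)..x, g t) (hgc : ContinuousOn g (Ico 0 b))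
    (hgpos : ∀ x ∈ Ioo (0:ℝ) b, 0 < g x)
    (hmono : StrictMonoOn (fun x => g x / x) (Ioo (0:ℝ) b))
    {r r' : ℝ} (hr : r ∈ Ioo (0:ℝ) b) (hr' : r' ∈ Ioo (0:ℝ) b) (hrr' : r < r') :
    (∫ x in (0:ℝ)..r', 1 / Real.sqrt (G r' - G x)) <
      ∫ x in (0:ℝ)..r, 1 / Real.sqrt (G r - G x) := by
  have hsub : ∀ ρ ∈ Ioo (0:ℝ) b, (∫ x in (0:ℝ)..ρ, 1 / Real.sqrt (G ρ - G x))
      = ∫ u in (0:ℝ)..1, ρ * (1 / Real.sqrt (G ρ - G (ρ*u))) := by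
    intro ρ hρ
    rw [intervalIntegral.integral_const_mul]
    rw [integral_comp_mul_left (fun x => 1 / Real.sqrt (G ρ - G x)) hρ.1.ne']
    rw [mul_zero, mul_one, smul_eq_mul, ← mul_assoc, mul_inv_cancel₀ hρ.1.ne', one_mul]
  rw [hsub r hr, hsub r' hr']
  have hint_r : IntervalIntegrable (fun u => r * (1 / Real.sqrt (G r - G (r*u)))) volume 0 1 :=
    (uIntegrable hG hgc hgpos hr).const_mul r
  have hint_r' : IntervalIntegrable (fun u => r' * (1 / Real.sqrt (G r' - G (r'*u)))) volume 0 1 :=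
    (uIntegrable hG hgc hgpos hr').const_mul r'
  have key : 0 < ∫ u in (0:ℝ)..1,
      (r * (1 / Real.sqrt (G r - G (r*u))) - r' * (1 / Real.sqrt (G r' - G (r'*u)))) := by
    refine intervalIntegral_pos_of_pos_on (hint_r.sub hint_r') ?_ one_pos
    intro u hu
    exact sub_pos.mpr (Fstrict hG hgc hgpos hmono hr hr' hrr' hu)
  rw [integral_sub hint_r hint_r'] at key
  linarith

end PeriodAux

open PeriodAux

/-- For the conservative equation `x'' + g(x) = 0`, if `d/dx (g(x)/x) < 0` on `(a,0)` and
`d/dx (g(x)/x) > 0` on `(0,b)`, then the period function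
`T(r) = √2 ∫ₛʳ dx/√(G(r) − G(x))` (with `s ∈ (a,0)` determined by `G(s) = G(r)`)
is strictly decreasing. -/
theorem period_strictAnti_of_deriv_div_sign
    (a b : ℝ) (g : ℝ → ℝ) (ha : a < 0) (hb : 0 < b)
    (hg : ContDiffOn ℝ 1 g (Ioo a b)) (hg0 : g 0 = 0) (hg'0 : 0 < deriv g 0)
    (hxg : ∀ x ∈ Ioo a b, x ≠ 0 → 0 < x * g x)
    (G : ℝ → ℝ) (hG : ∀ x, G x = ∫ s in (0:ℝ)..x, g s)
    (hneg : ∀ x ∈ Ioo a (0:ℝ), deriv (fun y => g y / y) x < 0)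
    (hpos : ∀ x ∈ Ioo (0:ℝ) b, 0 < deriv (fun y => g y / y) x) :
    ∀ r ∈ Ioo (0:ℝ) b, ∀ r' ∈ Ioo (0:ℝ) b, r < r' →
      ∀ s ∈ Ioo a (0:ℝ), ∀ s' ∈ Ioo a (0:ℝ), G s = G r → G s' = G r' →
      Real.sqrt 2 * (∫ x in s'..r', 1 / Real.sqrt (G r' - G x)) <
        Real.sqrt 2 * (∫ x in s..r, 1 / Real.sqrt (G r - G x)) := by
  intro r hr r' hr' hrr' s hs s' hs' hsr hs'r'
  have hgcont : ContinuousOn g (Ioo a b) := hg.continuousOn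
  have hgc : ContinuousOn g (Ico 0 b) :=
    hgcont.mono (fun x hx => ⟨lt_of_lt_of_le ha hx.1, hx.2⟩)
  have hgpos : ∀ x ∈ Ioo (0:ℝ) b, 0 < g x := by
    intro x hx
    have h := hxg x ⟨ha.trans hx.1, hx.2⟩ hx.1.ne'
    nlinarith [hx.1]
  -- strict monotonicity of g x / x on (0, b)
  have hmono : StrictMonoOn (fun x => g x / x) (Ioo (0:ℝ) b) := by
    apply strictMonoOn_of_deriv_pos (convex_Ioo 0 b)
    · exact ContinuousOn.div
        (hgcont.mono (fun x hx => ⟨ha.trans hx.1, hx.2⟩)) continuousOn_id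
        (fun x hx => hx.1.ne')
    · intro x hx
      rw [interior_Ioo] at hx
      exact hpos x hx
  have hanti : StrictAntiOn (fun x => g x / x) (Ioo a (0:ℝ)) := by
    apply strictAntiOn_of_deriv_neg (convex_Ioo a 0)
    · exact ContinuousOn.div
        (hgcont.mono (fun x hx => ⟨hx.1, hx.2.trans hb⟩)) continuousOn_id
        (fun x hx => hx.2.ne)
    · intro x hx
      rw [interior_Ioo] at hx
      exact hneg x hx
  -- reflected system
  set gR : ℝ → ℝ := fun x => -g (-x) with hgRdef
  set GR : ℝ → ℝ := fun x => G (-x) with hGRdef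
  have hGR : ∀ x, GR x = ∫ t in (0:ℝ)..x, gR t := by
    intro x
    have h1 : (∫ t in (0:ℝ)..x, g (-t)) = ∫ t in (-x)..(0:ℝ), g t := by
      simpa using intervalIntegral.integral_comp_neg (a := (0:ℝ)) (b := x) (f := g)
    have h2 : (∫ t in (0:ℝ)..x, gR t) = -∫ t in (0:ℝ)..x, g (-t) := by
      simp [hgRdef, intervalIntegral.integral_neg]
    rw [h2, h1, intervalIntegral.integral_symm, neg_neg, ← hG]
  have hgcR : ContinuousOn gR (Ico 0 (-a)) := by
    have h1 : ContinuousOn (fun x : ℝ => g (-x)) (Ico 0 (-a)) := by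
      apply hgcont.comp continuous_neg.continuousOn
      intro x hx
      show -x ∈ Ioo a b
      exact ⟨by linarith [hx.2], by linarith [hx.1, hb]⟩
    exact h1.neg
  have hgposR : ∀ x ∈ Ioo (0:ℝ) (-a), 0 < gR x := by
    intro x hx
    have hmem : -x ∈ Ioo a b := ⟨by linarith [hx.2], by linarith [hx.1, hb]⟩
    have h := hxg (-x) hmem (by intro h; apply hx.1.ne'; linarith [neg_eq_zero.mp h])
    simp only [hgRdef]
    nlinarith [hx.1]
  have hmonoR : StrictMonoOn (fun x => gR x / x) (Ioo (0:ℝ) (-a)) := by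
    intro x hx y hy hxy
    have hxmem : -x ∈ Ioo a (0:ℝ) := ⟨by linarith [hx.2], by linarith [hx.1]⟩
    have hymem : -y ∈ Ioo a (0:ℝ) := ⟨by linarith [hy.2], by linarith [hy.1]⟩
    have h := hanti hymem hxmem (by linarith)
    simp only [] at h ⊢
    have hxval : gR x / x = g (-x) / (-x) := by
      simp only [hgRdef]
      rw [div_neg, neg_div]
    have hyval : gR y / y = g (-y) / (-y) := by
      simp only [hgRdef]
      rw [div_neg, neg_div]
    rw [hxval, hyval]
    exact h
  have hbR : (0:ℝ) < -a := by linarith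
  -- membership facts
  have hsR : -s ∈ Ioo (0:ℝ) (-a) := ⟨by linarith [hs.2], by linarith [hs.1]⟩
  have hs'R : -s' ∈ Ioo (0:ℝ) (-a) := ⟨by linarith [hs'.2], by linarith [hs'.1]⟩
  -- G r < G r'
  have hGrr' : G r < G r' := Glt hG hgc hgpos hr.1.le hrr' hr'.2
  -- s' < s
  have hss' : s' < s := by
    rcases lt_trichotomy s' s with h | h | h
    · exact h
    · exfalso; rw [h] at hs'r'; rw [hsr] at hs'r'; linarith
    · exfalso
      have hR : GR (-s') < GR (-s) :=
        Glt hGR hgcR hgposR (by linarith [hs'.2]) (by linarith) (by linarith [hs.1])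
      simp only [hGRdef, neg_neg] at hR
      rw [hsr, hs'r'] at hR
      linarith
  have hsRlt : -s < -s' := by linarith
  -- positive-side pieces
  have I1 : IntervalIntegrable (fun x => 1 / Real.sqrt (G r - G x)) volume 0 r :=
    xIntegrable hG hgc hgpos hr
  have I1' : IntervalIntegrable (fun x => 1 / Real.sqrt (G r' - G x)) volume 0 r' :=
    xIntegrable hG hgc hgpos hr'
  have C1 : (∫ x in (0:ℝ)..r', 1 / Real.sqrt (G r' - G x)) <
      ∫ x in (0:ℝ)..r, 1 / Real.sqrt (G r - G x) :=
    posLt hG hgc hgpos hmono hr hr' hrr'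
  -- negative-side pieces via reflection
  have I2 : IntervalIntegrable (fun x => 1 / Real.sqrt (G r - G x)) volume s 0 := by
    have h := xIntegrable hGR hgcR hgposR hsR
    simp only [hGRdef, neg_neg] at h
    rw [← hsr]
    exact (IntervalIntegrable.iff_comp_neg
      (f := fun x => 1 / Real.sqrt (G s - G x)) (a := s) (b := 0)).mpr
      (by simpa using h.symm)
  have I2' : IntervalIntegrable (fun x => 1 / Real.sqrt (G r' - G x)) volume s' 0 := by
    have h := xIntegrable hGR hgcR hgposR hs'R
    simp only [hGRdef, neg_neg] at h
    rw [← hs'r']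
    exact (IntervalIntegrable.iff_comp_neg
      (f := fun x => 1 / Real.sqrt (G s' - G x)) (a := s') (b := 0)).mpr
      (by simpa using h.symm)
  have negEq : ∀ (σ : ℝ), (∫ x in σ..(0:ℝ), 1 / Real.sqrt (G σ - G x))
      = ∫ y in (0:ℝ)..(-σ), 1 / Real.sqrt (G σ - G (-y)) := by
    intro σ
    have h := intervalIntegral.integral_comp_neg (a := (0:ℝ)) (b := -σ)
      (f := fun x => 1 / Real.sqrt (G σ - G x))
    simp only [neg_neg, neg_zero] at h
    exact h.symm
  have C2 : (∫ x in s'..(0:ℝ), 1 / Real.sqrt (G r' - G x)) <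
      ∫ x in s..(0:ℝ), 1 / Real.sqrt (G r - G x) := by
    have h := posLt hGR hgcR hgposR hmonoR hsR hs'R hsRlt
    simp only [hGRdef, neg_neg] at h
    rw [← hsr, ← hs'r', negEq s, negEq s']
    exact h
  -- assemble
  have split : ∀ (σ ρ : ℝ),
      IntervalIntegrable (fun x => 1 / Real.sqrt (G ρ - G x)) volume σ 0 →
      IntervalIntegrable (fun x => 1 / Real.sqrt (G ρ - G x)) volume 0 ρ →
      (∫ x in σ..ρ, 1 / Real.sqrt (G ρ - G x))
        = (∫ x in σ..(0:ℝ), 1 / Real.sqrt (G ρ - G x))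
          + ∫ x in (0:ℝ)..ρ, 1 / Real.sqrt (G ρ - G x) := by
    intro σ ρ h1 h2
    rw [intervalIntegral.integral_add_adjacent_intervals h1 h2]
  rw [split s r I2 I1, split s' r' I2' I1']
  have hsqrt2 : 0 < Real.sqrt 2 := Real.sqrt_pos.mpr (by norm_num)
  have : (∫ x in s'..(0:ℝ), 1 / Real.sqrt (G r' - G x))
      + (∫ x in (0:ℝ)..r', 1 / Real.sqrt (G r' - G x))
      < (∫ x in s..(0:ℝ), 1 / Real.sqrt (G r - G x))
      + ∫ x in (0:ℝ)..r, 1 / Real.sqrt (G r - G x) := by linarith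
  exact mul_lt_mul_of_pos_left this hsqrt2
end

section
/- Let J = (a,b) with a < 0 < b, let g : ℝ → ℝ be C² on J with g(0) = 0 and x·g(x) > 0 for all x ∈ J \ {0}, and let G(x) = ∫₀ˣ g(s) ds. If x·g''(x) < 0 for all x ∈ J \ {0}, then g(x)² − 2·G(x)·g'(x) > 0 for all x ∈ J \ {0}. If instead x·g''(x) > 0 for all x ∈ J \ {0}, then g(x)² − 2·G(x)·g'(x) < 0 for all x ∈ J \ {0}. -/
open Set Real

private lemma sq_sub_aux
    (a b : ℝ) (g : ℝ → ℝ) (ha : a < 0) (hb : 0 < b)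
    (hg : ContDiffOn ℝ 2 g (Ioo a b)) (hg0 : g 0 = 0)
    (hxg : ∀ x ∈ Ioo a b, x ≠ 0 → 0 < x * g x)
    (G : ℝ → ℝ) (hG : ∀ x, G x = ∫ s in (0:ℝ)..x, g s)
    (ε : ℝ)
    (hgg : ∀ x ∈ Ioo a b, x ≠ 0 → 0 < ε * (x * deriv (deriv g) x)) :
    ∀ x ∈ Ioo a b, x ≠ 0 → 0 < -ε * (g x ^ 2 - 2 * G x * deriv g x) := by
  have hJo : IsOpen (Ioo a b) := isOpen_Ioo
  have h0J : (0:ℝ) ∈ Ioo a b := ⟨ha, hb⟩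
  have hgc : ContinuousOn g (Ioo a b) := hg.continuousOn
  have hgd : DifferentiableOn ℝ g (Ioo a b) := hg.differentiableOn two_ne_zero
  have hC1 : ContDiffOn ℝ 1 (deriv g) (Ioo a b) :=
    hg.deriv_of_isOpen hJo (by norm_num)
  have hg'd : DifferentiableOn ℝ (deriv g) (Ioo a b) := hC1.differentiableOn one_ne_zero
  have hg'At : ∀ y ∈ Ioo a b, HasDerivAt g (deriv g y) y := fun y hy =>
    ((hgd y hy).differentiableAt (hJo.mem_nhds hy)).hasDerivAt
  have hg''At : ∀ y ∈ Ioo a b, HasDerivAt (deriv g) (deriv (deriv g) y) y := fun y hy =>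
    ((hg'd y hy).differentiableAt (hJo.mem_nhds hy)).hasDerivAt
  -- derivative of G
  have hGint : ∀ y ∈ Ioo a b, IntervalIntegrable g MeasureTheory.volume 0 y := by
    intro y hy
    apply ContinuousOn.intervalIntegrable
    apply hgc.mono
    intro z hz
    rcases mem_uIcc.1 hz with h | h
    · exact ⟨lt_of_lt_of_le ha h.1, lt_of_le_of_lt h.2 hy.2⟩
    · exact ⟨lt_of_lt_of_le hy.1 h.1, lt_of_le_of_lt h.2 hb⟩
  have hGAt : ∀ y ∈ Ioo a b, HasDerivAt G (g y) y := by
    intro y hy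
    have hfun : G = fun u => ∫ s in (0:ℝ)..u, g s := funext hG
    rw [hfun]
    exact intervalIntegral.integral_hasDerivAt_right (hGint y hy)
      (hgc.stronglyMeasurableAtFilter hJo y hy) ((hgc y hy).continuousAt (hJo.mem_nhds hy))
  -- positivity of G
  have hGpos : ∀ y ∈ Ioo a b, y ≠ 0 → 0 < G y := by
    intro y hy hy0
    rcases lt_or_gt_of_ne hy0 with hneg | hpos
    · have hii : IntervalIntegrable (fun s => -g s) MeasureTheory.volume y 0 :=
        ((hGint y hy).symm).neg
      have := intervalIntegral.intervalIntegral_pos_of_pos_on hii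
        (fun s hs => by
          have hs' : s ∈ Ioo a b := ⟨lt_trans hy.1 hs.1, lt_trans hs.2 hb⟩
          have := hxg s hs' (ne_of_lt hs.2)
          nlinarith [hs.2]) hneg
      rw [intervalIntegral.integral_neg] at this
      rw [hG y, intervalIntegral.integral_symm y 0]
      linarith
    · have := intervalIntegral.intervalIntegral_pos_of_pos_on (hGint y hy)
        (fun s hs => by
          have hs' : s ∈ Ioo a b := ⟨lt_trans ha hs.1, lt_trans hs.2 hy.2⟩
          have := hxg s hs' (ne_of_gt hs.1)
          nlinarith [hs.1]) hpos
      rw [hG y]; exact this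
  -- the function H and its derivative
  set H : ℝ → ℝ := fun z => -ε * (g z ^ 2 - 2 * G z * deriv g z) with hHdef
  have hHAt : ∀ y ∈ Ioo a b, HasDerivAt H (2 * G y * (ε * deriv (deriv g) y)) y := by
    intro y hy
    have h1 := ((hg'At y hy).pow 2).sub
      (((hGAt y hy).const_mul 2).mul (hg''At y hy))
    have h2 := h1.const_mul (-ε)
    have h3 : HasDerivAt H _ y := h2
    convert h3 using 1
    rw [hg0] at *
    ring
  have hHcont : ∀ y ∈ Ioo a b, ContinuousAt H y := fun y hy => (hHAt y hy).continuousAt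
  have hH0 : H 0 = 0 := by
    simp only [hHdef, hg0, hG 0, intervalIntegral.integral_same]
    ring
  intro x hx hx0
  have hkey : ∀ y ∈ Ioo a b, y ≠ 0 → deriv H y = 2 * G y * (ε * deriv (deriv g) y) :=
    fun y hy _ => (hHAt y hy).deriv
  rcases lt_or_gt_of_ne hx0 with hneg | hpos
  · -- x < 0 : H strictly anti on Icc x 0
    have hsub : Icc x 0 ⊆ Ioo a b := fun y hy =>
      ⟨lt_of_lt_of_le hx.1 hy.1, lt_of_le_of_lt hy.2 hb⟩
    have hanti : StrictAntiOn H (Icc x 0) := by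
      apply strictAntiOn_of_deriv_neg (convex_Icc x 0)
        (fun y hy => (hHcont y (hsub hy)).continuousWithinAt)
      intro y hy
      rw [interior_Icc] at hy
      have hyJ : y ∈ Ioo a b := hsub ⟨le_of_lt hy.1, le_of_lt hy.2⟩
      rw [hkey y hyJ (ne_of_lt hy.2)]
      have h1 : 0 < G y := hGpos y hyJ (ne_of_lt hy.2)
      have h2 := hgg y hyJ (ne_of_lt hy.2)
      have h3 : ε * deriv (deriv g) y < 0 := by nlinarith [hy.2]
      nlinarith
    have := hanti (left_mem_Icc.2 (le_of_lt hneg)) (right_mem_Icc.2 (le_of_lt hneg)) hneg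
    rw [hH0] at this
    exact this
  · -- x > 0 : H strictly mono on Icc 0 x
    have hsub : Icc 0 x ⊆ Ioo a b := fun y hy =>
      ⟨lt_of_lt_of_le ha hy.1, lt_of_le_of_lt hy.2 hx.2⟩
    have hmono : StrictMonoOn H (Icc 0 x) := by
      apply strictMonoOn_of_deriv_pos (convex_Icc 0 x)
        (fun y hy => (hHcont y (hsub hy)).continuousWithinAt)
      intro y hy
      rw [interior_Icc] at hy
      have hyJ : y ∈ Ioo a b := hsub ⟨le_of_lt hy.1, le_of_lt hy.2⟩
      rw [hkey y hyJ (ne_of_gt hy.1)]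
      have h1 : 0 < G y := hGpos y hyJ (ne_of_gt hy.1)
      have h2 := hgg y hyJ (ne_of_gt hy.1)
      have h3 : 0 < ε * deriv (deriv g) y := by nlinarith [hy.1]
      nlinarith
    have := hmono (left_mem_Icc.2 (le_of_lt hpos)) (right_mem_Icc.2 (le_of_lt hpos)) hpos
    rw [hH0] at this
    exact this

/-- If `x·g''(x) < 0` on `J \ {0}` then `g(x)² − 2G(x)g'(x) > 0` on `J \ {0}`;
if instead `x·g''(x) > 0` on `J \ {0}` then `g(x)² − 2G(x)g'(x) < 0` on `J \ {0}`. -/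
theorem sq_sub_two_G_mul_deriv_sign
    (a b : ℝ) (g : ℝ → ℝ) (ha : a < 0) (hb : 0 < b)
    (hg : ContDiffOn ℝ 2 g (Ioo a b)) (hg0 : g 0 = 0)
    (hxg : ∀ x ∈ Ioo a b, x ≠ 0 → 0 < x * g x)
    (G : ℝ → ℝ) (hG : ∀ x, G x = ∫ s in (0:ℝ)..x, g s) :
    ((∀ x ∈ Ioo a b, x ≠ 0 → x * iteratedDeriv 2 g x < 0) →
      ∀ x ∈ Ioo a b, x ≠ 0 → 0 < g x ^ 2 - 2 * G x * deriv g x) ∧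
    ((∀ x ∈ Ioo a b, x ≠ 0 → 0 < x * iteratedDeriv 2 g x) →
      ∀ x ∈ Ioo a b, x ≠ 0 → g x ^ 2 - 2 * G x * deriv g x < 0) := by
  have hiter : iteratedDeriv 2 g = deriv (deriv g) := by
    rw [show (2:ℕ) = 1 + 1 from rfl, iteratedDeriv_succ, iteratedDeriv_one]
  constructor
  · intro hgg x hx hx0
    have := sq_sub_aux a b g ha hb hg hg0 hxg G hG (-1)
      (fun y hy hy0 => by have := hgg y hy hy0; rw [hiter] at this; linarith) x hx hx0
    linarith
  · intro hgg x hx hx0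
    have := sq_sub_aux a b g ha hb hg hg0 hxg G hG 1
      (fun y hy hy0 => by have := hgg y hy hy0; rw [hiter] at this; linarith) x hx hx0
    linarith
end

section
/- Let f : ℝ → ℝ be C¹ on a neighborhood of 0, and define h(x) = x⁻² ∫₀ˣ s·f(s) ds for x ≠ 0 and h(0) = f(0)/2. Then h is continuous at 0 and differentiable at 0, with h'(0) = f'(0)/3. -/
open Set Filter Topology Asymptotics MeasureTheory intervalIntegral
open scoped Interval

/-! Since `f s = f 0 + f'(0) s + o(s)`, the integrand is `s f s = f 0 s + f'(0) s² + o(s²)`, and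
integrating an `o(s²)` term from `0` to `x` gives `o(x³)`. Hence
`∫₀ˣ s f s = f 0 x²/2 + f'(0) x³/3 + o(x³)`, and dividing by `x²` gives
`h x = h 0 + f'(0) x/3 + o(x)`. -/

theorem isLittleO_integral_of_isLittleO_pow {E : Type*} [NormedAddCommGroup E] [NormedSpace ℝ E]
    {g : ℝ → E} {a : ℝ} {n : ℕ} (hg : g =o[𝓝 a] fun s => (s - a) ^ n) :
    (fun x => ∫ s in a..x, g s) =o[𝓝 a] fun x => (x - a) ^ (n + 1) := by
  refine IsLittleO.of_bound fun ε hε => ?_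
  obtain ⟨δ, hδ, hbound⟩ := Metric.eventually_nhds_iff_ball.1 (hg.def hε)
  filter_upwards [Metric.ball_mem_nhds a hδ] with x hx
  have hclose : ∀ s ∈ Ι a x, |s - a| ≤ |x - a| := fun s hs =>
    abs_sub_left_of_mem_uIcc (uIoc_subset_uIcc hs)
  calc ‖∫ s in a..x, g s‖ ≤ ε * |x - a| ^ n * |x - a| := by
        refine norm_integral_le_of_norm_le_const fun s hs => ?_
        have hs_ball : s ∈ Metric.ball a δ :=
          lt_of_le_of_lt (hclose s hs) (by simpa [Real.dist_eq] using hx)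
        calc ‖g s‖ ≤ ε * ‖(s - a) ^ n‖ := hbound s hs_ball
          _ ≤ ε * |x - a| ^ n := by
            rw [norm_pow, Real.norm_eq_abs]
            gcongr ε * ?_ ^ n
            exact hclose s hs
    _ = ε * ‖(x - a) ^ (n + 1)‖ := by rw [norm_pow, Real.norm_eq_abs, pow_succ, mul_assoc]

theorem eventually_intervalIntegrable_of_eventually_continuousAt {E : Type*}
    [NormedAddCommGroup E] {f : ℝ → E} {a : ℝ} (hf : ∀ᶠ y in 𝓝 a, ContinuousAt f y) :
    ∀ᶠ x in 𝓝 a, IntervalIntegrable f volume a x := by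
  obtain ⟨t, hft, ht, hat⟩ := eventually_nhds_iff.1 hf
  exact (hft a hat).tendsto.eventually_intervalIntegrable
    (ContinuousAt.stronglyMeasurableAtFilter ht hft a hat) (Measure.finiteAt_nhds _ _)
    tendsto_const_nhds tendsto_id

theorem integral_mul_eq_add_integral_sub {f : ℝ → ℝ} {x : ℝ}
    (hf : IntervalIntegrable (fun s => s * f s) volume 0 x) (c d : ℝ) :
    ∫ s in (0:ℝ)..x, s * f s =
      c * x ^ 2 / 2 + d * x ^ 3 / 3 + ∫ s in (0:ℝ)..x, (s * f s - (c * s + d * s ^ 2)) := by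
  have hpoly : IntervalIntegrable (fun s : ℝ => c * s + d * s ^ 2) volume 0 x :=
    (by fun_prop : Continuous fun s : ℝ => c * s + d * s ^ 2).intervalIntegrable _ _
  rw [integral_sub hf hpoly, integral_add (intervalIntegrable_id.const_mul _)
    ((intervalIntegrable_pow 2).const_mul _), intervalIntegral.integral_const_mul,
    intervalIntegral.integral_const_mul, integral_id, integral_pow]
  ring

/-- If `f` is `C¹` near `0` and `h(x) = x⁻² ∫₀ˣ s·f(s) ds` for `x ≠ 0`, `h(0) = f(0)/2`,
then `h` is continuous at `0` and differentiable at `0` with `h'(0) = f'(0)/3`. -/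
theorem continuous_and_hasDerivAt_of_integral_div_sq
    (f : ℝ → ℝ) (hf : ContDiffAt ℝ 1 f 0)
    (h : ℝ → ℝ)
    (hdef : ∀ x : ℝ, x ≠ 0 → h x = (x ^ 2)⁻¹ * ∫ s in (0:ℝ)..x, s * f s)
    (h0 : h 0 = f 0 / 2) :
    ContinuousAt h 0 ∧ HasDerivAt h (deriv f 0 / 3) 0 := by
  set d := deriv f 0
  set g : ℝ → ℝ := fun s => s * f s - (f 0 * s + d * s ^ 2)
  have hg : g =o[𝓝 0] fun s => s ^ 2 := by
    have hf' := hasDerivAt_iff_isLittleO_nhds_zero.1 (hf.differentiableAt one_ne_zero).hasDerivAt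
    refine ((isBigO_refl (fun s : ℝ => s) (𝓝 0)).mul_isLittleO hf').congr (fun s => ?_)
      fun s => (sq s).symm
    simp only [g, zero_add, smul_eq_mul]
    ring
  have hG : (fun x => ∫ s in (0:ℝ)..x, g s) =o[𝓝 0] fun x => x ^ 3 := by
    simpa using isLittleO_integral_of_isLittleO_pow (a := 0) (by simpa using hg)
  have hintegrable : ∀ᶠ x in 𝓝 0, IntervalIntegrable (fun s => s * f s) volume 0 x :=
    eventually_intervalIntegrable_of_eventually_continuousAt <|
      (hf.eventually (by simp)).mono fun y hy => continuousAt_id.mul hy.continuousAt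
  have hderiv : HasDerivAt h (d / 3) 0 := by
    rw [hasDerivAt_iff_isLittleO_nhds_zero]
    refine ((isBigO_refl (fun x : ℝ => (x ^ 2)⁻¹) (𝓝 0)).mul_isLittleO hG).congr' ?_
      (Eventually.of_forall fun x => ?_)
    · filter_upwards [hintegrable] with x hx
      -- at `x = 0` both sides vanish, the left one because `(0 ^ 2)⁻¹ = 0` in Lean
      rcases eq_or_ne x 0 with rfl | hx0
      · simp
      have hsplit : ∫ s in (0:ℝ)..x, s * f s =
          f 0 * x ^ 2 / 2 + d * x ^ 3 / 3 + ∫ s in (0:ℝ)..x, g s :=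
        integral_mul_eq_add_integral_sub hx (f 0) d
      rw [zero_add, hdef x hx0, h0, hsplit, smul_eq_mul]
      field_simp
      ring
    · rcases eq_or_ne x 0 with rfl | hx0
      · simp
      field_simp
  exact ⟨hderiv.continuousAt, hderiv⟩
end
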